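/- If (N, m) is integer unbounded for a nonredundant workflow net N and some m ∈ ℕ^P, then N is not continuously sound. -/

import Mathlib

structure PetriNet (P T : Type) [Fintype P] [Fintype T] where
  pre : T → P → ℕ
  post : T → P → ℕ

variable {P T : Type} [Fintype P] [Fintype T] [DecidableEq P]

namespace PetriNet

def enabled (N : PetriNet P T) (t : T) (m : P → ℕ) : Prop := ∀ p, N.pre t p ≤ m p

def fires (N : PetriNet P T) (m m' : P → ℕ) : Prop :=
  ∃ t, N.enabled t m ∧ ∀ p, m' p = m p + N.post t p - N.pre t p

def reach (N : PetriNet P T) : (P → ℕ) → (P → ℕ) → Prop := Relation.ReflTransGen N.fires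

def zfires (N : PetriNet P T) (m m' : P → ℤ) : Prop :=
  ∃ t, ∀ p, m' p = m p + (N.post t p : ℤ) - (N.pre t p : ℤ)

def zreach (N : PetriNet P T) : (P → ℤ) → (P → ℤ) → Prop := Relation.ReflTransGen N.zfires

def cfires (N : PetriNet P T) (m m' : P → ℚ) : Prop :=
  ∃ t, ∃ l : ℚ, 0 < l ∧ l ≤ 1 ∧ (∀ p, l * (N.pre t p : ℚ) ≤ m p) ∧
    ∀ p, m' p = m p + l * ((N.post t p : ℚ) - (N.pre t p : ℚ))

def creach (N : PetriNet P T) : (P → ℚ) → (P → ℚ) → Prop := Relation.ReflTransGen N.cfires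

def bounded (N : PetriNet P T) (m : P → ℕ) : Prop :=
  ∃ b : ℕ, ∀ m', N.reach m m' → ∀ p, m' p ≤ b

def zbounded (N : PetriNet P T) (m : P → ℕ) : Prop :=
  ∃ b : ℕ, ∀ m' : P → ℤ, N.zreach (fun p => (m p : ℤ)) m' → (∀ p, 0 ≤ m' p) →
    ∀ p, m' p ≤ (b : ℤ)

def quasiLive (N : PetriNet P T) (m : P → ℕ) (t : T) : Prop :=
  ∃ m', N.reach m m' ∧ N.enabled t m'

def live (N : PetriNet P T) (m : P → ℕ) (t : T) : Prop :=
  ∀ m', N.reach m m' → N.quasiLive m' t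

def freeChoice (N : PetriNet P T) : Prop :=
  ∀ s t : T, (∀ p, N.pre s p = 0 ∨ N.pre t p = 0) ∨ N.pre s = N.pre t

def edge (N : PetriNet P T) : (P ⊕ T) → (P ⊕ T) → Prop
  | Sum.inl p, Sum.inr t => 0 < N.pre t p
  | Sum.inr t, Sum.inl p => 0 < N.post t p
  | _, _ => False

end PetriNet

/-- The marking with `k` tokens in place `p` and none elsewhere. -/
def mk1 (p : P) (k : ℕ) : P → ℕ := fun q => if q = p then k else 0

/-- The continuous marking with `k` tokens in place `p` and none elsewhere. -/
def mkQ (p : P) (k : ℚ) : P → ℚ := fun q => if q = p then k else 0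

structure WorkflowNet (P T : Type) [Fintype P] [Fintype T] extends PetriNet P T where
  i : P
  f : P
  i_ne_f : i ≠ f
  no_into_initial : ∀ t, toPetriNet.post t i = 0
  no_from_final : ∀ t, toPetriNet.pre t f = 0
  place_on_path : ∀ p : P,
    Relation.ReflTransGen toPetriNet.edge (Sum.inl i) (Sum.inl p) ∧
    Relation.ReflTransGen toPetriNet.edge (Sum.inl p) (Sum.inl f)
  trans_on_path : ∀ t : T,
    Relation.ReflTransGen toPetriNet.edge (Sum.inl i) (Sum.inr t) ∧
    Relation.ReflTransGen toPetriNet.edge (Sum.inr t) (Sum.inl f)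

/-- `k`-soundness of a workflow net. -/
def WorkflowNet.ksound (N : WorkflowNet P T) (k : ℕ) : Prop :=
  ∀ m, N.toPetriNet.reach (mk1 N.i k) m → N.toPetriNet.reach m (mk1 N.f k)

/-- Continuous soundness of a workflow net. -/
def WorkflowNet.csound (N : WorkflowNet P T) : Prop :=
  ∀ m : P → ℚ, N.toPetriNet.creach (mkQ N.i 1) m → N.toPetriNet.creach m (mkQ N.f 1)

/-!
Integer unboundedness yields, by Dickson's lemma applied to the reachable markings together with
their Parikh vectors, a vector `d` of transition counts whose effect is nonnegative and nonzero.
Nonredundancy yields a marking `m₀`, continuously reachable from `{i:1}`, that marks every place;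
from `m₀`, firing `d` with a small enough fraction `l` adds `x = l • effect d > 0`. Continuous
soundness gives `m₀ ⇝ {f:1}`, hence `{i:1} ⇝ m₀ + x ⇝ {f:1} + x`, so `{f:1} + x ⇝ {f:1}`. This is
impossible: tokens on `f` are never consumed, and the last step of a nontrivial run ending in
`{f:1}` produces a token, necessarily on `f`.
-/

lemma Pi.induction_single_one_add {ι : Type*} [Fintype ι] [DecidableEq ι]
    {motive : (ι → ℕ) → Prop} (zero : motive 0)
    (single_one_add : ∀ i v, motive v → motive (Pi.single i 1 + v)) (v : ι → ℕ) : motive v := by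
  rw [← Finset.univ_sum_single v]
  induction (Finset.univ : Finset ι) using Finset.induction with
  | empty => simpa using zero
  | insert i s hi ih =>
    rw [Finset.sum_insert hi]
    induction v i with
    | zero => simpa using ih
    | succ k ihk =>
      rw [Pi.single_add, add_comm (Pi.single i k : ι → ℕ), add_assoc]
      exact single_one_add i _ ihk

namespace PetriNet

section
omit [DecidableEq P]

variable (N : PetriNet P T)

def consumption (v : T → ℕ) (p : P) : ℕ := ∑ t, v t * N.pre t p

def production (v : T → ℕ) (p : P) : ℕ := ∑ t, v t * N.post t p

def effect (v : T → ℕ) (p : P) : ℤ := N.production v p - N.consumption v p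

@[simp] lemma effect_zero : N.effect 0 = 0 := by
  ext; simp [effect, production, consumption]

lemma consumption_add (v w : T → ℕ) :
    N.consumption (v + w) = N.consumption v + N.consumption w := by
  ext; simp [consumption, add_mul, Finset.sum_add_distrib]

lemma effect_add (v w : T → ℕ) : N.effect (v + w) = N.effect v + N.effect w := by
  ext; simp [effect, production, consumption, add_mul, Finset.sum_add_distrib]; ring

lemma reach_add {a b : P → ℕ} (h : N.reach a b) (c : P → ℕ) : N.reach (a + c) (b + c) := by
  induction h with
  | refl => exact .refl
  | tail _ hstep ih =>
    obtain ⟨t, hen, heq⟩ := hstep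
    refine ih.tail ⟨t, fun p => (hen p).trans (Nat.le_add_right _ _), fun p => ?_⟩
    have := hen p
    simp only [Pi.add_apply, heq p]
    omega

lemma reach_add_add {a b c d : P → ℕ} (hab : N.reach a b) (hcd : N.reach c d) :
    N.reach (a + c) (b + d) :=
  (N.reach_add hab c).trans (by rw [add_comm b, add_comm b]; exact N.reach_add hcd b)

lemma creach_add {a b : P → ℚ} (h : N.creach a b) {x : P → ℚ} (hx : 0 ≤ x) :
    N.creach (a + x) (b + x) := by
  induction h with
  | refl => exact .refl
  | tail _ hstep ih =>
    obtain ⟨t, l, hl0, hl1, hen, heq⟩ := hstep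
    refine ih.tail ⟨t, l, hl0, hl1, fun p => ?_, fun p => ?_⟩
    · simp only [Pi.add_apply]
      linarith [hen p, show (0 : ℚ) ≤ x p from hx p]
    · simp only [Pi.add_apply, heq p]
      ring

lemma creach_smul_of_reach {a b : P → ℕ} (h : N.reach a b) {c : ℚ} (hc0 : 0 < c) (hc1 : c ≤ 1) :
    N.creach (fun p => c * a p) (fun p => c * b p) := by
  induction h with
  | refl => exact .refl
  | @tail m m' _ hstep ih =>
    obtain ⟨t, hen, heq⟩ := hstep
    refine ih.tail ⟨t, c, hc0, hc1, fun p => ?_, fun p => ?_⟩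
    · show c * (N.pre t p : ℚ) ≤ c * m p
      gcongr
      exact_mod_cast hen p
    · have : (m' p : ℚ) + N.pre t p = m p + N.post t p := by
        exact_mod_cast (show m' p + N.pre t p = m p + N.post t p by
          have := hen p; have := heq p; omega)
      show c * (m' p : ℚ) = c * m p + _
      linear_combination c * this

variable [DecidableEq T]

lemma consumption_single (t : T) : N.consumption (Pi.single t 1) = N.pre t := by
  ext; simp [consumption, Pi.single_apply]

lemma effect_single (t : T) (p : P) :
    N.effect (Pi.single t 1) p = N.post t p - N.pre t p := by
  simp [effect, production, consumption, Pi.single_apply]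

lemma exists_effect_of_zreach {a b : P → ℤ} (h : N.zreach a b) :
    ∃ v : T → ℕ, b = a + N.effect v := by
  induction h with
  | refl => exact ⟨0, by simp⟩
  | tail _ hstep ih =>
    obtain ⟨v, rfl⟩ := ih
    obtain ⟨t, ht⟩ := hstep
    refine ⟨v + Pi.single t 1, funext fun p => ?_⟩
    simp only [ht p, effect_add, effect_single, Pi.add_apply]
    ring

lemma exists_effect_pos_of_not_zbounded {m : P → ℕ} (hub : ¬ N.zbounded m) :
    ∃ d : T → ℕ, 0 < N.effect d := by
  simp only [zbounded, not_exists, not_forall, exists_prop, not_le] at hub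
  have hseq : ∀ n : ℕ, ∃ g : P → ℕ, ∃ v : T → ℕ,
      (∀ q, (g q : ℤ) = m q + N.effect v q) ∧ ∃ p, n < g p := by
    intro n
    obtain ⟨g, hreach, hnonneg, p, hp⟩ := hub n
    lift g to P → ℕ using hnonneg
    obtain ⟨v, hv⟩ := N.exists_effect_of_zreach hreach
    exact ⟨g, v, fun q => congrFun hv q, p, by simpa using hp⟩
  choose g v hgv hg using hseq
  -- Dickson's lemma: along a subsequence both the markings and the Parikh vectors increase
  obtain ⟨φ, hφ⟩ := wellQuasiOrdered_le.exists_monotone_subseq (fun n => (g n, v n))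
  set a := φ 0
  set n := ∑ q, g a q + 1
  obtain ⟨hg_le, hv_le⟩ : g a ≤ g (φ n) ∧ v a ≤ v (φ n) := hφ 0 n n.zero_le
  obtain ⟨d, hd⟩ := exists_add_of_le hv_le
  have heffect : ∀ q, (g (φ n) q : ℤ) = g a q + N.effect d q := fun q => by
    rw [hgv, hgv, hd, effect_add, Pi.add_apply, add_assoc]
  obtain ⟨p, hp⟩ := hg (φ n)
  have hgap : g a p < g (φ n) p := calc
    g a p ≤ ∑ q, g a q := Finset.single_le_sum (fun q _ => (g a q).zero_le) (Finset.mem_univ p)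
    _ < n := Nat.lt_succ_self _
    _ ≤ φ n := φ.strictMono.id_le n
    _ < g (φ n) p := hp
  refine ⟨d, Pi.lt_def.2 ⟨fun q => ?_, p, ?_⟩⟩
  · have : g a q ≤ g (φ n) q := hg_le q
    have := heffect q
    simp only [Pi.zero_apply]
    omega
  · have := heffect p
    simp only [Pi.zero_apply]
    omega

lemma creach_add_smul_effect {l : ℚ} (hl0 : 0 < l) (hl1 : l ≤ 1) (v : T → ℕ) {m : P → ℚ}
    (hm : ∀ p, l * N.consumption v p ≤ m p) :
    N.creach m (fun p => m p + l * N.effect v p) := by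
  induction v using Pi.induction_single_one_add generalizing m with
  | zero => simpa using .refl
  | single_one_add t v ih =>
    simp only [consumption_add, consumption_single, Pi.add_apply, Nat.cast_add] at hm
    set m₁ : P → ℚ := fun p => m p + l * ((N.post t p : ℚ) - N.pre t p)
    have hfire : N.cfires m m₁ := ⟨t, l, hl0, hl1,
      fun p => by nlinarith [hm p, (N.consumption v p).cast_nonneg (α := ℚ)], fun p => rfl⟩
    have hm₁ : ∀ p, l * N.consumption v p ≤ m₁ p := fun p => by
      have : 0 ≤ l * (N.post t p : ℚ) := by positivity
      simp only [m₁]; linarith [hm p]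
    have htarget : (fun p => m p + l * N.effect (Pi.single t 1 + v) p) =
        fun p => m₁ p + l * N.effect v p := by
      ext p
      simp only [m₁, effect_add, effect_single, Pi.add_apply]
      push_cast
      ring
    rw [htarget]
    exact .head hfire (ih hm₁)

open Filter Topology in
lemma exists_creach_add_smul_effect {m : P → ℚ} (hm : ∀ p, 0 < m p) (v : T → ℕ) :
    ∃ l > 0, N.creach m (fun p => m p + l * N.effect v p) := by
  have hsmall : ∀ᶠ l in 𝓝 (0 : ℚ), l ≤ 1 ∧ ∀ p, l * N.consumption v p ≤ m p := by
    refine (eventually_le_nhds one_pos).and (eventually_all.2 fun p => ?_)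
    have : Tendsto (fun l : ℚ => l * N.consumption v p) (𝓝 0) (𝓝 0) := by
      simpa using (tendsto_id (x := 𝓝 (0 : ℚ))).mul_const (N.consumption v p : ℚ)
    exact this.eventually (eventually_le_nhds (hm p))
  obtain ⟨l, ⟨hl1, hl⟩, hl0⟩ := ((eventually_nhdsWithin_of_eventually_nhds hsmall
    (s := Set.Ioi 0)).and self_mem_nhdsWithin).exists
  exact ⟨l, hl0, N.creach_add_smul_effect hl0 hl1 v hl⟩

end

end PetriNet

namespace WorkflowNet

variable (N : WorkflowNet P T)

section
omit [DecidableEq P]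

lemma apply_final_le_of_creach {a b : P → ℚ} (h : N.creach a b) : a N.f ≤ b N.f := by
  induction h with
  | refl => exact le_rfl
  | tail _ hstep ih =>
    obtain ⟨t, l, hl0, -, -, heq⟩ := hstep
    have : 0 ≤ l * N.post t N.f := by positivity
    rw [heq, N.no_from_final]
    push_cast
    linarith

lemma exists_post_pos (t : T) : ∃ p, 0 < N.post t p := by
  rcases (N.trans_on_path t).2.cases_head with h | ⟨x, hx, -⟩
  · cases h
  · cases x with
    | inl p => exact ⟨p, hx⟩
    | inr => exact hx.elim

end

def Nonredundant : Prop :=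
  ∀ p : P, ∃ k : ℕ, 0 < k ∧ ∃ m : P → ℕ, N.toPetriNet.reach (mk1 N.i k) m ∧ 1 ≤ m p

lemma exists_reach_pos (hnr : N.Nonredundant) :
    ∃ K > 0, ∃ m : P → ℕ, N.reach (mk1 N.i K) m ∧ ∀ p, 0 < m p := by
  have hcover : ∀ s : Finset P,
      ∃ K > 0, ∃ m : P → ℕ, N.reach (mk1 N.i K) m ∧ ∀ p ∈ s, 0 < m p := by
    intro s
    induction s using Finset.induction with
    | empty =>
      obtain ⟨k, hk, m, hm, -⟩ := hnr N.i
      exact ⟨k, hk, m, hm, by simp⟩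
    | insert p s _ ih =>
      obtain ⟨K, hK, m, hm, hpos⟩ := ih
      obtain ⟨k, -, m', hm', hm'p⟩ := hnr p
      have hsplit : mk1 N.i (K + k) = mk1 N.i K + mk1 N.i k := by
        ext q; by_cases hq : q = N.i <;> simp [mk1, hq]
      refine ⟨K + k, by omega, m + m', hsplit ▸ N.reach_add_add hm hm', ?_⟩
      simp only [Finset.mem_insert, forall_eq_or_imp, Pi.add_apply]
      exact ⟨by omega, fun q hq => by have := hpos q hq; omega⟩
  simpa using hcover Finset.univ

lemma exists_creach_pos (hnr : N.Nonredundant) :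
    ∃ m : P → ℚ, N.creach (mkQ N.i 1) m ∧ ∀ p, 0 < m p := by
  obtain ⟨K, hK, m, hm, hpos⟩ := N.exists_reach_pos hnr
  refine ⟨fun p => (K : ℚ)⁻¹ * m p, ?_, fun p => by have := hpos p; positivity⟩
  have hscale : mkQ N.i 1 = fun p => (K : ℚ)⁻¹ * mk1 N.i K p := by
    ext q; by_cases hq : q = N.i <;> simp [mkQ, mk1, hq, hK.ne']
  rw [hscale]
  exact N.creach_smul_of_reach hm (by positivity) (inv_le_one_of_one_le₀ (by exact_mod_cast hK))

lemma eq_final_of_creach_final {m : P → ℚ} (h : N.creach m (mkQ N.f 1)) (hm : 1 ≤ m N.f) :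
    m = mkQ N.f 1 := by
  rcases h.cases_tail with h | ⟨m', hm', t, l, hl0, -, hen, heq⟩
  · exact h.symm
  exfalso
  obtain ⟨q, hq⟩ := N.exists_post_pos t
  have hq' : (1 : ℚ) ≤ N.post t q := by exact_mod_cast hq
  have hqf : q = N.f := by
    by_contra hne
    have := heq q
    simp only [mkQ, hne, if_false] at this
    nlinarith [hen q]
  subst hqf
  have h1 := heq N.f
  simp only [mkQ, if_true, N.no_from_final, Nat.cast_zero, sub_zero] at h1
  have h2 := N.apply_final_le_of_creach hm'
  nlinarith

end WorkflowNet

theorem stmt11 (N : WorkflowNet P T)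
    (hnr : ∀ p : P, ∃ k : ℕ, 0 < k ∧ ∃ m : P → ℕ,
      N.toPetriNet.reach (mk1 N.i k) m ∧ 1 ≤ m p)
    (m : P → ℕ) (hub : ¬ N.toPetriNet.zbounded m) :
    ¬ N.csound := by
  classical
  intro hsound
  obtain ⟨d, hd⟩ := N.exists_effect_pos_of_not_zbounded hub
  obtain ⟨m₀, hm₀, hpos⟩ := N.exists_creach_pos hnr
  obtain ⟨l, hl, hpump⟩ := N.exists_creach_add_smul_effect hpos d
  set x : P → ℚ := fun p => l * N.effect d p
  have hx : 0 < x := by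
    obtain ⟨hle, p, hp⟩ := Pi.lt_def.1 hd
    exact Pi.lt_def.2 ⟨fun q => mul_nonneg hl.le (Int.cast_nonneg (hle q)),
      p, mul_pos hl (Int.cast_pos.2 hp)⟩
  have hback : N.creach (mkQ N.f 1 + x) (mkQ N.f 1) :=
    hsound _ (hm₀.trans (hpump.trans (N.creach_add (hsound m₀ hm₀) hx.le)))
  have hfinal := N.eq_final_of_creach_final hback (by simpa [mkQ] using hx.le N.f)
  exact hx.ne' (by simpa using hfinal)
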